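/- arXiv:1504.01159 — 2 statements merged into one kernel-verified Lean document; each statement's English description precedes it below -/
import Mathlib

section
/- In a CAT(0) space, if δ₁ and δ₂ are two distinct complete geodesic lines with the same pair of endpoints at infinity, then δ₁ and δ₂ bound a flat strip: there is an isometric embedding of ℝ × [a,b] (a < b) whose boundary lines are δ₁ and δ₂. -/
open Set

/-- `f` is a unit-speed geodesic segment from `p` to `q`, parameterized on
`[0, dist p q]`. -/
def IsGeodSeg {X : Type*} [MetricSpace X] (f : ℝ → X) (p q : X) : Prop :=
  f 0 = p ∧ f (dist p q) = q ∧
    ∀ s ∈ Icc 0 (dist p q), ∀ t ∈ Icc 0 (dist p q), dist (f s) (f t) = |s - t|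

/-- A geodesic metric space satisfying the CAT(0) comparison (CN) inequality. -/
def IsCAT0 (X : Type*) [MetricSpace X] : Prop :=
  (∀ p q : X, ∃ f : ℝ → X, IsGeodSeg f p q) ∧
  ∀ (p q : X) (f : ℝ → X), IsGeodSeg f p q → ∀ z : X, ∀ s ∈ Icc (0:ℝ) 1,
    dist z (f (s * dist p q)) ^ 2 ≤
      (1 - s) * dist z p ^ 2 + s * dist z q ^ 2 - s * (1 - s) * dist p q ^ 2

namespace FlatStripAux

variable {X : Type*} [MetricSpace X]

lemma le_of_sq_le_sq {a b : ℝ} (ha : 0 ≤ a) (hb : 0 ≤ b) (h : a ^ 2 ≤ b ^ 2) : a ≤ b := by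
  have := Real.sqrt_le_sqrt h
  rwa [Real.sqrt_sq ha, Real.sqrt_sq hb] at this

noncomputable def geo (hX : IsCAT0 X) (p q : X) : ℝ → X := (hX.1 p q).choose

lemma geo_spec (hX : IsCAT0 X) (p q : X) : IsGeodSeg (geo hX p q) p q := (hX.1 p q).choose_spec

lemma geo_zero (hX : IsCAT0 X) (p q : X) : geo hX p q 0 = p := (geo_spec hX p q).1

lemma geo_end (hX : IsCAT0 X) (p q : X) : geo hX p q (dist p q) = q := (geo_spec hX p q).2.1

lemma geo_dist (hX : IsCAT0 X) (p q : X) {s t : ℝ} (hs : s ∈ Icc 0 (dist p q))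
    (ht : t ∈ Icc 0 (dist p q)) : dist (geo hX p q s) (geo hX p q t) = |s - t| :=
  (geo_spec hX p q).2.2 s hs t ht

lemma dist_geo_left (hX : IsCAT0 X) (p q : X) {y : ℝ} (hy : y ∈ Icc 0 (dist p q)) :
    dist p (geo hX p q y) = y := by
  have h := geo_dist hX p q (left_mem_Icc.2 dist_nonneg) hy
  rw [geo_zero] at h
  rw [h, abs_of_nonpos (by linarith [hy.1])]; ring

lemma dist_geo_right (hX : IsCAT0 X) (p q : X) {y : ℝ} (hy : y ∈ Icc 0 (dist p q)) :
    dist (geo hX p q y) q = dist p q - y := by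
  have h := geo_dist hX p q hy (right_mem_Icc.2 dist_nonneg)
  rw [geo_end] at h
  rw [h, abs_of_nonpos (by linarith [hy.2])]; ring

lemma cn (hX : IsCAT0 X) (p q z : X) {s : ℝ} (hs : s ∈ Icc (0:ℝ) 1) :
    dist z (geo hX p q (s * dist p q)) ^ 2 ≤
      (1 - s) * dist z p ^ 2 + s * dist z q ^ 2 - s * (1 - s) * dist p q ^ 2 :=
  hX.2 p q _ (geo_spec hX p q) z s hs

noncomputable def midp (hX : IsCAT0 X) (p q : X) : X := geo hX p q (dist p q / 2)

lemma mem_half (p q : X) : dist p q / 2 ∈ Icc 0 (dist p q) :=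
  ⟨by linarith [dist_nonneg (x := p) (y := q)], by linarith [dist_nonneg (x := p) (y := q)]⟩

lemma dist_midp_left (hX : IsCAT0 X) (p q : X) : dist p (midp hX p q) = dist p q / 2 :=
  dist_geo_left hX p q (mem_half p q)

lemma dist_midp_right (hX : IsCAT0 X) (p q : X) : dist (midp hX p q) q = dist p q / 2 := by
  have h := dist_geo_right hX p q (mem_half p q)
  unfold midp
  rw [h]; ring

lemma cn_mid (hX : IsCAT0 X) (p q z : X) :
    dist z (midp hX p q) ^ 2 ≤
      dist z p ^ 2 / 2 + dist z q ^ 2 / 2 - dist p q ^ 2 / 4 := by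
  have h := cn hX p q z (s := 1/2) ⟨by norm_num, by norm_num⟩
  have e : (1/2 : ℝ) * dist p q = dist p q / 2 := by ring
  rw [e] at h
  calc dist z (midp hX p q) ^ 2 ≤ _ := h
  _ = _ := by ring

lemma midp_unique (hX : IsCAT0 X) {p q m : X} (h1 : dist p m = dist p q / 2)
    (h2 : dist m q = dist p q / 2) : m = midp hX p q := by
  have h := cn_mid hX p q m
  rw [dist_comm m p, h1] at h
  rw [h2] at h
  have : dist m (midp hX p q) = 0 := by
    nlinarith [dist_nonneg (x := m) (y := midp hX p q)]
  exact dist_eq_zero.1 this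

lemma midp_comm (hX : IsCAT0 X) (p q : X) : midp hX p q = midp hX q p := by
  apply midp_unique hX (p := q) (q := p)
  · rw [dist_comm q (midp hX p q), dist_comm q p]
    exact dist_midp_right hX p q
  · rw [dist_comm _ p, dist_comm q p]
    exact dist_midp_left hX p q

lemma iso_midp (hX : IsCAT0 X) {α : ℝ → X} (hα : Isometry α) (s t : ℝ) :
    α ((s + t) / 2) = midp hX (α s) (α t) := by
  apply midp_unique hX
  · rw [hα.dist_eq, hα.dist_eq, Real.dist_eq, Real.dist_eq]
    rw [show s - (s+t)/2 = (s-t)/2 by ring, abs_div]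
    simp [abs_of_nonneg]
  · rw [hα.dist_eq, hα.dist_eq, Real.dist_eq, Real.dist_eq]
    rw [show (s+t)/2 - t = (s-t)/2 by ring, abs_div]
    simp [abs_of_nonneg]

/-- midpoint contraction with common endpoint. -/
lemma contract_common (hX : IsCAT0 X) (x p q : X) :
    dist (midp hX x p) (midp hX x q) ≤ dist p q / 2 := by
  set L := dist x p with hL
  set M := dist x q with hM
  set D := dist p q with hD
  have h1 : dist p (midp hX x q) ^ 2 ≤ L ^ 2 / 2 + D ^ 2 / 2 - M ^ 2 / 4 := by
    have h := cn_mid hX x q p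
    rw [dist_comm p x] at h
    exact h
  have h2 := cn_mid hX x p (midp hX x q)
  rw [dist_comm (midp hX x q) x, dist_midp_left hX x q] at h2
  have h3 : dist (midp hX x q) (midp hX x p) ^ 2 ≤ (D/2) ^ 2 := by
    rw [dist_comm (midp hX x q) p] at h2
    calc dist (midp hX x q) (midp hX x p) ^ 2 ≤ _ := h2
    _ ≤ (D/2)^2 := by nlinarith [h1]
  rw [dist_comm (midp hX x p) (midp hX x q)]
  exact le_of_sq_le_sq dist_nonneg (by positivity) h3

/-- general midpoint contraction. -/
lemma contract (hX : IsCAT0 X) (p q p' q' : X) :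
    dist (midp hX p q) (midp hX p' q') ≤ dist p p' / 2 + dist q q' / 2 := by
  have h1 : dist (midp hX p q) (midp hX p q') ≤ dist q q' / 2 := contract_common hX p q q'
  have h2 : dist (midp hX p q') (midp hX p' q') ≤ dist p p' / 2 := by
    rw [midp_comm hX p q', midp_comm hX p' q']
    exact contract_common hX q' p p'
  calc dist (midp hX p q) (midp hX p' q') ≤ _ := dist_triangle _ (midp hX p q') _
  _ ≤ _ := by linarith

/-- a midpoint-convex function on ℝ bounded above is constant. -/
lemma mpc_const {f : ℝ → ℝ} {B : ℝ} (hm : ∀ s t, f ((s + t) / 2) ≤ (f s + f t) / 2)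
    (hb : ∀ t, f t ≤ B) : ∀ s t, f s = f t := by
  have aux : ∀ x y : ℝ, ¬ f x < f y := by
    intro x y hlt
    set d := f y - f x with hd
    have hdpos : 0 < d := by simp [hd]; linarith
    set g : ℕ → ℝ := fun n => y + n * (y - x) with hg
    have step : ∀ n : ℕ, d ≤ f (g (n+1)) - f (g n) := by
      intro n
      induction n with
      | zero =>
        have h1 := hm x (g 1)
        have e : (x + g 1) / 2 = y := by simp [hg]; ring
        rw [e] at h1
        have e0 : g 0 = y := by simp [hg]
        rw [e0]
        linarith [h1]
      | succ n ih =>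
        have := hm (g n) (g (n+2))
        have e : (g n + g (n+2)) / 2 = g (n+1) := by simp [hg]; push_cast; ring
        rw [e] at this
        linarith
    have tot : ∀ n : ℕ, f y + n * d ≤ f (g n) := by
      intro n
      induction n with
      | zero => simp [hg]
      | succ n ih =>
        have := step n
        push_cast
        linarith
    obtain ⟨n, hn⟩ := exists_nat_gt ((B - f y) / d)
    have := tot n
    have := hb (g n)
    have : (n : ℝ) * d ≤ B - f y := by linarith
    have : (n : ℝ) ≤ (B - f y) / d := (le_div_iff₀ hdpos).2 this
    linarith
  intro s t
  rcases lt_trichotomy (f s) (f t) with h | h | h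
  · exact absurd h (aux s t)
  · exact h
  · exact absurd h (aux t s)

/-- constancy of distance between parallel lines. -/
lemma const_dist (hX : IsCAT0 X) {α β : ℝ → X} (hα : Isometry α) (hβ : Isometry β)
    (B : ℝ) (hb : ∀ t, dist (α t) (β t) ≤ B) :
    ∀ t, dist (α t) (β t) = dist (α 0) (β 0) := by
  intro t
  have hm : ∀ s t : ℝ, dist (α ((s+t)/2)) (β ((s+t)/2)) ≤
      (dist (α s) (β s) + dist (α t) (β t)) / 2 := by
    intro s t
    rw [iso_midp hX hα s t, iso_midp hX hβ s t]
    calc dist (midp hX (α s) (α t)) (midp hX (β s) (β t)) ≤ _ := contract hX _ _ _ _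
    _ = _ := by ring
  exact mpc_const hm hb t 0

/-- CN inequality along an isometric line. -/
lemma cn_line (hX : IsCAT0 X) {γ : ℝ → X} (hγ : Isometry γ) (a b : ℝ) (z : X)
    {s : ℝ} (hs : s ∈ Icc (0:ℝ) 1) :
    dist z (γ ((1 - s) * a + s * b)) ^ 2 ≤
      (1 - s) * dist z (γ a) ^ 2 + s * dist z (γ b) ^ 2 - s * (1 - s) * (b - a) ^ 2 := by
  have key : ∀ a b : ℝ, a ≤ b → ∀ s : ℝ, s ∈ Icc (0:ℝ) 1 →
      dist z (γ ((1 - s) * a + s * b)) ^ 2 ≤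
      (1 - s) * dist z (γ a) ^ 2 + s * dist z (γ b) ^ 2 - s * (1 - s) * (b - a) ^ 2 := by
    intro a b hab s hs
    set f : ℝ → X := fun r => γ (a + r) with hf
    have hd : dist (γ a) (γ b) = b - a := by
      rw [hγ.dist_eq, Real.dist_eq, abs_of_nonpos (by linarith)]; ring
    have hseg : IsGeodSeg f (γ a) (γ b) := by
      refine ⟨by simp [hf], by rw [hd]; simp [hf], ?_⟩
      intro u _ v _
      rw [hγ.dist_eq, Real.dist_eq]
      congr 1; ring
    have h := hX.2 (γ a) (γ b) f hseg z s hs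
    rw [hd] at h
    have e : f (s * (b - a)) = γ ((1 - s) * a + s * b) := by
      simp only [hf]; congr 1; ring
    rw [e] at h
    calc dist z (γ ((1-s)*a + s*b)) ^ 2 ≤ _ := h
    _ = _ := by ring
  rcases le_total a b with hab | hab
  · exact key a b hab s hs
  · have h := key b a hab (1 - s) ⟨by linarith [hs.2], by linarith [hs.1]⟩
    have e : (1 - (1-s)) * b + (1-s) * a = (1-s) * a + s * b := by ring
    rw [e] at h
    calc dist z (γ ((1-s)*a + s*b)) ^ 2 ≤ _ := h
    _ = _ := by ring

/-- star rigidity: diagonal midpoints lie on the midline. -/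
lemma star (hX : IsCAT0 X) {α β : ℝ → X} (hα : Isometry α) (hβ : Isometry β)
    {D : ℝ} (hD : ∀ t, dist (α t) (β t) = D) (s t : ℝ) :
    midp hX (α s) (β t) = midp hX (α ((s+t)/2)) (β ((s+t)/2)) := by
  set n := midp hX (α s) (β t) with hn
  have h1 : dist (α ((s+t)/2)) n ≤ D / 2 := by
    rw [iso_midp hX hα s t, hn]
    calc dist (midp hX (α s) (α t)) (midp hX (α s) (β t)) ≤ dist (α t) (β t) / 2 :=
      contract_common hX (α s) (α t) (β t)
    _ = D / 2 := by rw [hD]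
  have h2 : dist n (β ((s+t)/2)) ≤ D / 2 := by
    have e : (s+t)/2 = (t+s)/2 := by ring
    rw [e, iso_midp hX hβ t s, hn, midp_comm hX (α s) (β t)]
    calc dist (midp hX (β t) (α s)) (midp hX (β t) (β s)) ≤ dist (α s) (β s) / 2 :=
      contract_common hX (β t) (α s) (β s)
    _ = D / 2 := by rw [hD]
  have h3 : dist (α ((s+t)/2)) (β ((s+t)/2)) = D := hD _
  have h4 := dist_triangle (α ((s+t)/2)) n (β ((s+t)/2))
  have e1 : dist (α ((s+t)/2)) n = D / 2 := by linarith
  have e2 : dist n (β ((s+t)/2)) = D / 2 := by linarith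
  exact midp_unique hX (by rw [e1, h3]) (by rw [e2, h3])

lemma corner (hX : IsCAT0 X) {α β : ℝ → X} (hα : Isometry α) (hβ : Isometry β)
    (hconst : ∀ t c, dist (α t) (β (t + c)) = dist (α 0) (β c))
    (hmin : ∀ c, dist (α 0) (β 0) ≤ dist (α 0) (β c)) :
    ∀ s t, dist (α s) (β t) ^ 2 = (t - s) ^ 2 + dist (α 0) (β 0) ^ 2 := by
  set ψ : ℝ → ℝ := fun c => dist (α 0) (β c) with hψdef
  set D := dist (α 0) (β 0) with hDdef
  have hψ : ∀ s t : ℝ, dist (α s) (β t) = ψ (t - s) := by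
    intro s t
    have := hconst s (t - s)
    rwa [show s + (t - s) = t by ring] at this
  have hDt : ∀ t, dist (α t) (β t) = D := by
    intro t; rw [hψ t t]; simp [hψdef, hDdef]
  have hψ0 : ψ 0 = D := rfl
  have hψnn : ∀ c, 0 ≤ ψ c := fun c => dist_nonneg
  have hDnn : 0 ≤ D := dist_nonneg
  -- diagonal midpoints
  have nstar : ∀ s t : ℝ, midp hX (α s) (β t) = midp hX (α 0) (β (s + t)) := by
    intro s t
    rw [star hX hα hβ hDt s t]
    have := star hX hα hβ hDt 0 (s + t)
    rw [show (0 + (s+t))/2 = (s+t)/2 by ring] at this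
    exact this.symm
  -- projection inequality
  have proj : ∀ c : ℝ, c ^ 2 + D ^ 2 ≤ ψ c ^ 2 := by
    intro c
    have key : ∀ s : ℝ, 0 < s → s ≤ 1 → D ^ 2 + (1 - s) * c ^ 2 ≤ ψ c ^ 2 := by
      intro s hs0 hs1
      have h := cn_line hX hβ 0 c (α 0) (s := s) ⟨le_of_lt hs0, hs1⟩
      rw [show (1 - s) * 0 + s * c = s * c by ring] at h
      have h2 : D ^ 2 ≤ ψ (s * c) ^ 2 := by
        have := hmin (s * c)
        nlinarith [hψnn (s * c)]
      have h3 : dist (α 0) (β (s * c)) = ψ (s * c) := rfl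
      rw [h3] at h
      have h4 : dist (α 0) (β 0) = D := rfl
      have h5 : dist (α 0) (β c) = ψ c := rfl
      rw [h4, h5] at h
      have h6 : s * (D ^ 2 + (1 - s) * c ^ 2) ≤ s * ψ c ^ 2 := by nlinarith
      exact le_of_mul_le_mul_left h6 hs0
    rcases eq_or_ne c 0 with rfl | hc
    · have := key 1 one_pos le_rfl; nlinarith
    · by_contra hcon
      push_neg at hcon
      set ε := c ^ 2 + D ^ 2 - ψ c ^ 2 with hε
      have hεpos : 0 < ε := by simp [hε]; linarith
      have hc2 : 0 < c ^ 2 := by positivity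
      set s := min 1 (ε / (2 * c ^ 2)) with hs
      have hs0 : 0 < s := lt_min one_pos (by positivity)
      have hs1 : s ≤ 1 := min_le_left _ _
      have := key s hs0 hs1
      have hsc : s * c ^ 2 ≤ ε / 2 := by
        have : s ≤ ε / (2 * c ^ 2) := min_le_right _ _
        calc s * c ^ 2 ≤ (ε / (2 * c ^ 2)) * c ^ 2 := by nlinarith
        _ = ε / 2 := by field_simp
      nlinarith
  -- the flatness equality
  have flat : ∀ r : ℝ, ψ r ^ 2 = r ^ 2 + D ^ 2 := by
    intro r
    have h := cn_mid hX (α r) (β 0) (α 0)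
    have e1 : midp hX (α r) (β 0) = midp hX (α 0) (β r) := by
      have := nstar r 0; rwa [show r + 0 = r by ring] at this
    rw [e1, dist_midp_left hX (α 0) (β r)] at h
    have e2 : dist (α 0) (β r) = ψ r := rfl
    have e3 : dist (α 0) (α r) = |r| := by rw [hα.dist_eq, Real.dist_eq]; simp [abs_sub_comm]
    have e4 : dist (α 0) (β 0) = D := rfl
    have e5 : dist (α r) (β 0) = ψ (-r) := by rw [hψ]; ring_nf
    rw [e2, e3, e4, e5] at h
    have e6 : |r| ^ 2 = r ^ 2 := sq_abs r
    rw [e6] at h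
    have p1 := proj r
    have p2 := proj (-r)
    rw [show (-r) ^ 2 = r ^ 2 by ring] at p2
    nlinarith
  intro s t
  rw [hψ s t, flat (t - s)]

lemma sqrt_scale {c A : ℝ} (hc : 0 ≤ c) : Real.sqrt (c ^ 2 * A) = c * Real.sqrt A := by
  rw [Real.sqrt_mul (sq_nonneg c), Real.sqrt_sq hc]

lemma sqrt_le_of {x c : ℝ} (hc : 0 ≤ c) (h : x ≤ c ^ 2) : Real.sqrt x ≤ c := by
  calc Real.sqrt x ≤ Real.sqrt (c ^ 2) := Real.sqrt_le_sqrt h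
  _ = c := Real.sqrt_sq hc

lemma le_sqrt_of {x c : ℝ} (hc : 0 ≤ c) (h : c ^ 2 ≤ x) : c ≤ Real.sqrt x := by
  calc c = Real.sqrt (c ^ 2) := (Real.sqrt_sq hc).symm
  _ ≤ Real.sqrt x := Real.sqrt_le_sqrt h

lemma dist_eq_sqrt_of_sq {a b : X} {x : ℝ} (h : dist a b ^ 2 = x) :
    dist a b = Real.sqrt x := by rw [← h, Real.sqrt_sq dist_nonneg]

section Strip

variable {D : ℝ}

/-- the strip map. -/
noncomputable def Fp (hX : IsCAT0 X) (α β : ℝ → X) (t y : ℝ) : X := geo hX (α t) (β t) y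

lemma Fp_zero (hX : IsCAT0 X) (α β : ℝ → X) (t : ℝ) : Fp hX α β t 0 = α t := geo_zero hX _ _

lemma Fp_top (hX : IsCAT0 X) {α β : ℝ → X} (hDt : ∀ t, dist (α t) (β t) = D) (t : ℝ) :
    Fp hX α β t D = β t := by
  have := geo_end hX (α t) (β t)
  rwa [hDt t] at this

lemma dist_Fp_left (hX : IsCAT0 X) {α β : ℝ → X} (hDt : ∀ t, dist (α t) (β t) = D)
    {y : ℝ} (hy : y ∈ Icc 0 D) (t : ℝ) : dist (α t) (Fp hX α β t y) = y :=
  dist_geo_left hX (α t) (β t) (by rw [hDt]; exact hy)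

lemma dist_Fp_right (hX : IsCAT0 X) {α β : ℝ → X} (hDt : ∀ t, dist (α t) (β t) = D)
    {y : ℝ} (hy : y ∈ Icc 0 D) (t : ℝ) : dist (Fp hX α β t y) (β t) = D - y := by
  have := dist_geo_right hX (α t) (β t) (y := y) (by rw [hDt]; exact hy)
  rwa [hDt t] at this

lemma cnF (hX : IsCAT0 X) {α β : ℝ → X} (hDpos : 0 < D)
    (hDt : ∀ t, dist (α t) (β t) = D) {y : ℝ} (hy : y ∈ Icc 0 D) (t : ℝ) (z : X) :
    dist z (Fp hX α β t y) ^ 2 ≤ (1 - y / D) * dist z (α t) ^ 2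
      + (y / D) * dist z (β t) ^ 2 - (y / D) * (1 - y / D) * D ^ 2 := by
  have hs : y / D ∈ Icc (0:ℝ) 1 := ⟨div_nonneg hy.1 hDpos.le, by
    rw [div_le_one hDpos]; exact hy.2⟩
  have h := cn hX (α t) (β t) z hs
  rw [hDt t] at h
  rwa [show y / D * D = y from by field_simp] at h

lemma upper1 (hX : IsCAT0 X) {α β : ℝ → X} (hα : Isometry α) (hDpos : 0 < D)
    (hDt : ∀ t, dist (α t) (β t) = D)
    (hcorner : ∀ s t, dist (α s) (β t) ^ 2 = (t - s) ^ 2 + D ^ 2)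
    {y : ℝ} (hy : y ∈ Icc 0 D) (u t : ℝ) :
    dist (α u) (Fp hX α β t y) ^ 2 ≤ (u - t) ^ 2 + y ^ 2 := by
  have h := cnF hX hDpos hDt hy t (α u)
  have e1 : dist (α u) (α t) ^ 2 = (u - t) ^ 2 := by
    rw [hα.dist_eq, Real.dist_eq, sq_abs]
  have e2 : dist (α u) (β t) ^ 2 = (t - u) ^ 2 + D ^ 2 := hcorner u t
  rw [e1, e2] at h
  calc dist (α u) (Fp hX α β t y) ^ 2 ≤ _ := h
  _ = (u - t) ^ 2 + y ^ 2 := by field_simp; ring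

lemma upper2 (hX : IsCAT0 X) {α β : ℝ → X} (hβ : Isometry β) (hDpos : 0 < D)
    (hDt : ∀ t, dist (α t) (β t) = D)
    (hcorner : ∀ s t, dist (α s) (β t) ^ 2 = (t - s) ^ 2 + D ^ 2)
    {y : ℝ} (hy : y ∈ Icc 0 D) (u t : ℝ) :
    dist (β u) (Fp hX α β t y) ^ 2 ≤ (u - t) ^ 2 + (D - y) ^ 2 := by
  have h := cnF hX hDpos hDt hy t (β u)
  have e1 : dist (β u) (α t) ^ 2 = (u - t) ^ 2 + D ^ 2 := by
    rw [dist_comm, hcorner t u]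
  have e2 : dist (β u) (β t) ^ 2 = (u - t) ^ 2 := by
    rw [hβ.dist_eq, Real.dist_eq, sq_abs]
  rw [e1, e2] at h
  calc dist (β u) (Fp hX α β t y) ^ 2 ≤ _ := h
  _ = (u - t) ^ 2 + (D - y) ^ 2 := by field_simp; ring

lemma exact1 (hX : IsCAT0 X) {α β : ℝ → X} (hα : Isometry α) (hβ : Isometry β)
    (hDpos : 0 < D) (hDt : ∀ t, dist (α t) (β t) = D)
    (hcorner : ∀ s t, dist (α s) (β t) ^ 2 = (t - s) ^ 2 + D ^ 2)
    {y : ℝ} (hy : y ∈ Icc 0 D) (u t : ℝ) :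
    dist (α u) (Fp hX α β t y) = Real.sqrt ((u - t) ^ 2 + y ^ 2) := by
  have hA : (0:ℝ) ≤ (u - t) ^ 2 + y ^ 2 := by positivity
  have hle : dist (α u) (Fp hX α β t y) ≤ Real.sqrt ((u - t) ^ 2 + y ^ 2) := by
    have := upper1 hX hα hDpos hDt hcorner hy u t
    calc dist (α u) (Fp hX α β t y)
        = Real.sqrt (dist (α u) (Fp hX α β t y) ^ 2) := (Real.sqrt_sq dist_nonneg).symm
    _ ≤ _ := Real.sqrt_le_sqrt this
  refine le_antisymm hle ?_
  rcases eq_or_lt_of_le hy.1 with h0 | h0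
  · -- y = 0
    subst h0
    rw [Fp_zero, show (u-t)^2 + (0:ℝ)^2 = (u-t)^2 by ring, Real.sqrt_sq_eq_abs,
      hα.dist_eq, Real.dist_eq]
  · -- y > 0
    set S := t - (D - y) * (u - t) / y with hS
    have key1 : dist (α u) (β S) = Real.sqrt ((u - S) ^ 2 + D ^ 2) := by
      apply dist_eq_sqrt_of_sq
      rw [hcorner u S]; ring
    have key2 : dist (β S) (Fp hX α β t y) ≤ Real.sqrt ((S - t) ^ 2 + (D - y) ^ 2) := by
      have := upper2 hX hβ hDpos hDt hcorner hy S t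
      calc dist (β S) (Fp hX α β t y)
          = Real.sqrt (dist (β S) (Fp hX α β t y) ^ 2) := (Real.sqrt_sq dist_nonneg).symm
      _ ≤ _ := Real.sqrt_le_sqrt this
    have e1 : (u - S) ^ 2 + D ^ 2 = (D / y) ^ 2 * ((u - t) ^ 2 + y ^ 2) := by
      rw [hS]; field_simp; ring
    have e2 : (S - t) ^ 2 + (D - y) ^ 2 = ((D - y) / y) ^ 2 * ((u - t) ^ 2 + y ^ 2) := by
      rw [hS]; field_simp; ring
    have s1 : Real.sqrt ((u - S) ^ 2 + D ^ 2)
        = (D / y) * Real.sqrt ((u - t) ^ 2 + y ^ 2) := by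
      rw [e1, sqrt_scale (by positivity)]
    have s2 : Real.sqrt ((S - t) ^ 2 + (D - y) ^ 2)
        = ((D - y) / y) * Real.sqrt ((u - t) ^ 2 + y ^ 2) := by
      rw [e2, sqrt_scale (div_nonneg (by linarith [hy.2]) h0.le)]
    have tri := dist_triangle (α u) (Fp hX α β t y) (β S)
    rw [dist_comm (Fp hX α β t y) (β S), key1, s1] at tri
    have comb : (D / y) * Real.sqrt ((u - t) ^ 2 + y ^ 2)
        = Real.sqrt ((u - t) ^ 2 + y ^ 2) + ((D - y) / y) * Real.sqrt ((u - t) ^ 2 + y ^ 2) := by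
      field_simp; ring
    rw [s2] at key2
    linarith

lemma exact2 (hX : IsCAT0 X) {α β : ℝ → X} (hα : Isometry α) (hβ : Isometry β)
    (hDpos : 0 < D) (hDt : ∀ t, dist (α t) (β t) = D)
    (hcorner : ∀ s t, dist (α s) (β t) ^ 2 = (t - s) ^ 2 + D ^ 2)
    {y : ℝ} (hy : y ∈ Icc 0 D) (u t : ℝ) :
    dist (β u) (Fp hX α β t y) = Real.sqrt ((u - t) ^ 2 + (D - y) ^ 2) := by
  have hle : dist (β u) (Fp hX α β t y) ≤ Real.sqrt ((u - t) ^ 2 + (D - y) ^ 2) := by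
    have := upper2 hX hβ hDpos hDt hcorner hy u t
    calc dist (β u) (Fp hX α β t y)
        = Real.sqrt (dist (β u) (Fp hX α β t y) ^ 2) := (Real.sqrt_sq dist_nonneg).symm
    _ ≤ _ := Real.sqrt_le_sqrt this
  refine le_antisymm hle ?_
  rcases eq_or_lt_of_le hy.2 with h0 | h0
  · -- y = D
    rw [h0, Fp_top hX hDt, show (u-t)^2 + (D - D) ^ 2 = (u-t)^2 by ring,
      Real.sqrt_sq_eq_abs, hβ.dist_eq, Real.dist_eq]
  · -- y < D
    set S := t - y * (u - t) / (D - y) with hS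
    have hDy : 0 < D - y := by linarith
    have key1 : dist (β u) (α S) = Real.sqrt ((u - S) ^ 2 + D ^ 2) := by
      apply dist_eq_sqrt_of_sq
      rw [dist_comm, hcorner S u]
    have key2 : dist (α S) (Fp hX α β t y) ≤ Real.sqrt ((S - t) ^ 2 + y ^ 2) := by
      have := upper1 hX hα hDpos hDt hcorner hy S t
      calc dist (α S) (Fp hX α β t y)
          = Real.sqrt (dist (α S) (Fp hX α β t y) ^ 2) := (Real.sqrt_sq dist_nonneg).symm
      _ ≤ _ := Real.sqrt_le_sqrt this
    have e1 : (u - S) ^ 2 + D ^ 2 = (D / (D - y)) ^ 2 * ((u - t) ^ 2 + (D - y) ^ 2) := by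
      rw [hS]; field_simp; ring
    have e2 : (S - t) ^ 2 + y ^ 2 = (y / (D - y)) ^ 2 * ((u - t) ^ 2 + (D - y) ^ 2) := by
      rw [hS]; field_simp; ring
    have s1 : Real.sqrt ((u - S) ^ 2 + D ^ 2)
        = (D / (D - y)) * Real.sqrt ((u - t) ^ 2 + (D - y) ^ 2) := by
      rw [e1, sqrt_scale (by positivity)]
    have s2 : Real.sqrt ((S - t) ^ 2 + y ^ 2)
        = (y / (D - y)) * Real.sqrt ((u - t) ^ 2 + (D - y) ^ 2) := by
      rw [e2, sqrt_scale (div_nonneg hy.1 hDy.le)]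
    have tri := dist_triangle (β u) (Fp hX α β t y) (α S)
    rw [dist_comm (Fp hX α β t y) (α S), key1, s1] at tri
    have comb : (D / (D - y)) * Real.sqrt ((u - t) ^ 2 + (D - y) ^ 2)
        = Real.sqrt ((u - t) ^ 2 + (D - y) ^ 2)
          + (y / (D - y)) * Real.sqrt ((u - t) ^ 2 + (D - y) ^ 2) := by
      field_simp; ring
    rw [s2] at key2
    linarith

lemma strip_upper (hX : IsCAT0 X) {α β : ℝ → X} (hα : Isometry α) (hβ : Isometry β)
    (hDpos : 0 < D) (hDt : ∀ t, dist (α t) (β t) = D)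
    (hcorner : ∀ s t, dist (α s) (β t) ^ 2 = (t - s) ^ 2 + D ^ 2)
    {y y' : ℝ} (hy : y ∈ Icc 0 D) (hy' : y' ∈ Icc 0 D) (t t' : ℝ) :
    dist (Fp hX α β t y) (Fp hX α β t' y') ≤ Real.sqrt ((t - t') ^ 2 + (y - y') ^ 2) := by
  have h := cnF hX hDpos hDt hy t (Fp hX α β t' y')
  have e1 : dist (Fp hX α β t' y') (α t) ^ 2 = (t - t') ^ 2 + y' ^ 2 := by
    rw [dist_comm, exact1 hX hα hβ hDpos hDt hcorner hy' t t',
      Real.sq_sqrt (by positivity)]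
  have e2 : dist (Fp hX α β t' y') (β t) ^ 2 = (t - t') ^ 2 + (D - y') ^ 2 := by
    rw [dist_comm, exact2 hX hα hβ hDpos hDt hcorner hy' t t',
      Real.sq_sqrt (by positivity)]
  rw [e1, e2] at h
  have h2 : dist (Fp hX α β t' y') (Fp hX α β t y) ^ 2 ≤ (t - t') ^ 2 + (y - y') ^ 2 := by
    calc dist (Fp hX α β t' y') (Fp hX α β t y) ^ 2 ≤ _ := h
    _ = (t - t') ^ 2 + (y - y') ^ 2 := by field_simp; ring
  rw [dist_comm]
  calc dist (Fp hX α β t' y') (Fp hX α β t y)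
      = Real.sqrt (dist (Fp hX α β t' y') (Fp hX α β t y) ^ 2) :=
        (Real.sqrt_sq dist_nonneg).symm
  _ ≤ _ := Real.sqrt_le_sqrt h2

lemma strip_lower_ne (hX : IsCAT0 X) {α β : ℝ → X} (hα : Isometry α) (hβ : Isometry β)
    (hDpos : 0 < D) (hDt : ∀ t, dist (α t) (β t) = D)
    (hcorner : ∀ s t, dist (α s) (β t) ^ 2 = (t - s) ^ 2 + D ^ 2)
    {y y' : ℝ} (hy : y ∈ Icc 0 D) (hy' : y' ∈ Icc 0 D) (hlt : y' < y) (t t' : ℝ) :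
    Real.sqrt ((t - t') ^ 2 + (y - y') ^ 2) ≤ dist (Fp hX α β t y) (Fp hX α β t' y') := by
  set R := (t - t') ^ 2 + (y - y') ^ 2 with hR
  have hRnn : (0:ℝ) ≤ R := by positivity
  have hyy : 0 < y - y' := by linarith
  set T := t + (t' - t) * y / (y - y') with hT
  have k1 : dist (α T) (Fp hX α β t y) = Real.sqrt ((T - t) ^ 2 + y ^ 2) :=
    exact1 hX hα hβ hDpos hDt hcorner hy T t
  have k2 : dist (α T) (Fp hX α β t' y') = Real.sqrt ((T - t') ^ 2 + y' ^ 2) :=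
    exact1 hX hα hβ hDpos hDt hcorner hy' T t'
  have e1 : (T - t) ^ 2 + y ^ 2 = (y / (y - y')) ^ 2 * R := by
    rw [hT, hR]; field_simp; ring
  have e2 : (T - t') ^ 2 + y' ^ 2 = (y' / (y - y')) ^ 2 * R := by
    rw [hT, hR]; field_simp; ring
  have s1 : Real.sqrt ((T - t) ^ 2 + y ^ 2) = (y / (y - y')) * Real.sqrt R := by
    rw [e1, sqrt_scale (div_nonneg hy.1 hyy.le)]
  have s2 : Real.sqrt ((T - t') ^ 2 + y' ^ 2) = (y' / (y - y')) * Real.sqrt R := by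
    rw [e2, sqrt_scale (div_nonneg hy'.1 hyy.le)]
  have tri := dist_triangle (α T) (Fp hX α β t' y') (Fp hX α β t y)
  rw [k1, k2, s1, s2, dist_comm (Fp hX α β t' y') (Fp hX α β t y)] at tri
  have comb : (y / (y - y')) * Real.sqrt R
      = Real.sqrt R + (y' / (y - y')) * Real.sqrt R := by
    field_simp; ring
  linarith

lemma strip_lower_eq (hX : IsCAT0 X) {α β : ℝ → X} (hα : Isometry α) (hβ : Isometry β)
    (hDpos : 0 < D) (hDt : ∀ t, dist (α t) (β t) = D)
    (hcorner : ∀ s t, dist (α s) (β t) ^ 2 = (t - s) ^ 2 + D ^ 2)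
    {y : ℝ} (hy : y ∈ Icc 0 D) (t t' : ℝ) (hlt : t ≤ t') :
    t' - t ≤ dist (Fp hX α β t y) (Fp hX α β t' y) := by
  apply le_of_forall_pos_le_add
  intro ε hε
  set M := max 1 (y ^ 2 / (2 * ε)) with hM
  have hM1 : (1:ℝ) ≤ M := le_max_left _ _
  have hMpos : (0:ℝ) < M := by linarith
  set T := t - M with hTd
  have k1 : t' - T ≤ dist (α T) (Fp hX α β t' y) := by
    rw [exact1 hX hα hβ hDpos hDt hcorner hy T t']
    exact le_sqrt_of (by linarith) (by nlinarith [sq_nonneg y])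
  have k2 : dist (α T) (Fp hX α β t y) ≤ M + y ^ 2 / (2 * M) := by
    rw [exact1 hX hα hβ hDpos hDt hcorner hy T t]
    apply sqrt_le_of (by positivity)
    have e : T - t = -M := by rw [hTd]; ring
    rw [e]
    have h4 : 0 ≤ (y ^ 2 / (2 * M)) ^ 2 := sq_nonneg _
    have e2 : M * (y ^ 2 / (2 * M)) = y ^ 2 / 2 := by field_simp
    nlinarith
  have hy2 : y ^ 2 / (2 * M) ≤ ε := by
    rw [div_le_iff₀ (by positivity)]
    have h5 : y ^ 2 / (2 * ε) ≤ M := le_max_right _ _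
    rw [div_le_iff₀ (by positivity)] at h5
    nlinarith
  have tri := dist_triangle (α T) (Fp hX α β t y) (Fp hX α β t' y)
  linarith

lemma strip_dist (hX : IsCAT0 X) {α β : ℝ → X} (hα : Isometry α) (hβ : Isometry β)
    (hDpos : 0 < D) (hDt : ∀ t, dist (α t) (β t) = D)
    (hcorner : ∀ s t, dist (α s) (β t) ^ 2 = (t - s) ^ 2 + D ^ 2)
    {y y' : ℝ} (hy : y ∈ Icc 0 D) (hy' : y' ∈ Icc 0 D) (t t' : ℝ) :
    dist (Fp hX α β t y) (Fp hX α β t' y') = Real.sqrt ((t - t') ^ 2 + (y - y') ^ 2) := by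
  refine le_antisymm (strip_upper hX hα hβ hDpos hDt hcorner hy hy' t t') ?_
  rcases lt_trichotomy y' y with h | h | h
  · exact strip_lower_ne hX hα hβ hDpos hDt hcorner hy hy' h t t'
  · have habs : Real.sqrt ((t - t') ^ 2 + (y - y') ^ 2) = |t - t'| := by
      rw [h, show (t - t') ^ 2 + (y - y) ^ 2 = (t - t') ^ 2 by ring, Real.sqrt_sq_eq_abs]
    rw [habs, h]
    rcases le_total t t' with hle | hle
    · rw [abs_of_nonpos (by linarith)]
      have := strip_lower_eq hX hα hβ hDpos hDt hcorner hy t t' hle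
      linarith
    · rw [abs_of_nonneg (by linarith)]
      have := strip_lower_eq hX hα hβ hDpos hDt hcorner hy t' t hle
      rw [dist_comm] at this
      linarith
  · have := strip_lower_ne hX hα hβ hDpos hDt hcorner hy' hy h t' t
    rw [dist_comm, show (t' - t) ^ 2 + (y' - y) ^ 2 = (t - t') ^ 2 + (y - y') ^ 2 by ring] at this
    exact this

end Strip

end FlatStripAux

open FlatStripAux

/-- Flat Strip Theorem: in a complete CAT(0) space, two distinct parallel geodesic
lines (at bounded distance, i.e. with the same endpoints at infinity) bound a flat
strip: an isometrically embedded Euclidean strip `ℝ × [a,b]` (`a < b`) whose two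
boundary lines are the given geodesics. -/
theorem stmt_8 {X : Type*} [MetricSpace X] [CompleteSpace X] (hX : IsCAT0 X)
    (γ₁ γ₂ : ℝ → X) (h₁ : Isometry γ₁) (h₂ : Isometry γ₂)
    (hne : Set.range γ₁ ≠ Set.range γ₂)
    (C : ℝ) (hpar : ∀ t : ℝ, dist (γ₁ t) (γ₂ t) ≤ C) :
    ∃ a b : ℝ, a < b ∧ ∃ F : ℝ × ℝ → X,
      (∀ q q' : ℝ × ℝ, q.2 ∈ Icc a b → q'.2 ∈ Icc a b →
        dist (F q) (F q') = Real.sqrt ((q.1 - q'.1) ^ 2 + (q.2 - q'.2) ^ 2)) ∧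
      (∀ t : ℝ, F (t, a) = γ₁ t) ∧
      (∃ c : ℝ, ∀ t : ℝ, F (t, b) = γ₂ (t + c)) := by
  -- constancy of shifted distances
  have hshift : ∀ c : ℝ, Isometry (fun t => γ₂ (t + c)) := by
    intro c
    apply Isometry.of_dist_eq
    intro x y
    rw [h₂.dist_eq, Real.dist_eq, Real.dist_eq]
    congr 1; ring
  have hconst : ∀ c t : ℝ, dist (γ₁ t) (γ₂ (t + c)) = dist (γ₁ 0) (γ₂ (0 + c)) := by
    intro c t
    exact const_dist hX h₁ (hshift c) (C + |c|) (fun u => by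
      calc dist (γ₁ u) (γ₂ (u + c)) ≤ dist (γ₁ u) (γ₂ u) + dist (γ₂ u) (γ₂ (u + c)) :=
        dist_triangle _ _ _
      _ ≤ C + |c| := by
        have e : dist (γ₂ u) (γ₂ (u + c)) = |c| := by
          rw [h₂.dist_eq, Real.dist_eq, show u - (u + c) = -c by ring, abs_neg]
        rw [e]
        exact add_le_add_left (hpar u) _) t
  set φ : ℝ → ℝ := fun c => dist (γ₁ 0) (γ₂ c) with hφ
  have hφcont : Continuous φ := Continuous.dist continuous_const h₂.continuous
  have hφlb : ∀ c, |c| - φ 0 ≤ φ c := by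
    intro c
    have h5 : dist (γ₂ 0) (γ₂ c) = |c| := by
      rw [h₂.dist_eq, Real.dist_eq]; simp [abs_sub_comm]
    have := dist_triangle (γ₂ 0) (γ₁ 0) (γ₂ c)
    rw [h5, dist_comm (γ₂ 0) (γ₁ 0)] at this
    simp only [hφ]
    linarith
  have hφ0 : 0 ≤ φ 0 := dist_nonneg
  set A : ℝ := 2 * φ 0 + 1 with hA
  have h0mem : (0:ℝ) ∈ Icc (-A) A := by constructor <;> simp [hA] <;> linarith
  obtain ⟨c₀, hc₀mem, hc₀⟩ := isCompact_Icc.exists_isMinOn (Set.nonempty_of_mem h0mem)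
    hφcont.continuousOn
  have hmin : ∀ c, φ c₀ ≤ φ c := by
    intro c
    by_cases hc : c ∈ Icc (-A) A
    · exact hc₀ hc
    · have habs : A < |c| := by
        simp only [mem_Icc, not_and_or, not_le] at hc
        rcases hc with hc | hc
        · rw [abs_of_neg (by linarith)]; linarith
        · rw [abs_of_pos (by linarith)]; linarith
      have := hφlb c
      have h6 : φ c₀ ≤ φ 0 := hc₀ h0mem
      simp only [hA] at habs
      linarith
  -- the normalized companion line
  set β : ℝ → X := fun t => γ₂ (t + c₀) with hβd
  have hβ : Isometry β := hshift c₀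
  have hβconst : ∀ t c : ℝ, dist (γ₁ t) (β (t + c)) = dist (γ₁ 0) (β c) := by
    intro t c
    have := hconst (c + c₀) t
    simp only [hβd]
    rw [show t + c + c₀ = t + (c + c₀) by ring, this, show (0:ℝ) + (c + c₀) = c + c₀ by ring]
  have hβmin : ∀ c : ℝ, dist (γ₁ 0) (β 0) ≤ dist (γ₁ 0) (β c) := by
    intro c
    simp only [hβd]
    rw [show (0:ℝ) + c₀ = c₀ by ring]
    exact hmin (c + c₀)
  set D : ℝ := dist (γ₁ 0) (β 0) with hD
  have hDt : ∀ t, dist (γ₁ t) (β t) = D := by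
    intro t
    have := hβconst t 0
    rwa [add_zero] at this
  have hcorner : ∀ s t, dist (γ₁ s) (β t) ^ 2 = (t - s) ^ 2 + D ^ 2 :=
    corner hX h₁ hβ hβconst hβmin
  have hDnn : 0 ≤ D := dist_nonneg
  have hDpos : 0 < D := by
    rcases eq_or_lt_of_le hDnn with h0 | h0
    · exfalso
      apply hne
      have heq : γ₁ = β := by
        funext t
        have := hDt t
        rw [← h0] at this
        exact dist_eq_zero.1 this
      rw [heq]
      ext x
      simp only [Set.mem_range, hβd]
      constructor
      · rintro ⟨t, rfl⟩; exact ⟨t + c₀, rfl⟩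
      · rintro ⟨t, rfl⟩; exact ⟨t - c₀, by rw [sub_add_cancel]⟩
    · exact h0
  refine ⟨0, D, hDpos, fun q => Fp hX γ₁ β q.1 q.2, ?_, ?_, ?_⟩
  · intro q q' hq hq'
    exact strip_dist hX h₁ hβ hDpos hDt hcorner hq hq' q.1 q'.1
  · intro t
    exact Fp_zero hX γ₁ β t
  · exact ⟨c₀, fun t => Fp_top hX hDt t⟩
end

section
/- Let x₁, y₁, y₂, x₂ be four points in counterclockwise cyclic order on the circle S¹, representing endpoint pairs {x₁,y₁} and {x₂,y₂} that do not link. Then an unordered pair {x,y} of distinct points of S¹ links neither {x₁,y₁} nor {x₂,y₂} but links every pair that links both {x₁,y₁} and {x₂,y₂}, if and only if x lies in the counterclockwise closed arc [x₂,x₁] and y lies in the counterclockwise closed arc [y₁,y₂]. -/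
open Real Set

lemma two_pi_pos' : (0:ℝ) < 2*Real.pi := by positivity

/-- strict cyclic betweenness on reals -/
def sbtwC (a b c : ℝ) : Prop := (a<b ∧ b<c) ∨ (b<c ∧ c<a) ∨ (c<a ∧ a<b)
/-- weak cyclic betweenness on reals -/
def btwC (a b c : ℝ) : Prop := (a≤b ∧ b≤c) ∨ (b≤c ∧ c≤a) ∨ (c≤a ∧ a≤b)

lemma btwC_sbtwC (u v w : ℝ) : btwC u v w ∧ ¬ btwC w v u ↔ sbtwC u v w := by
  unfold btwC sbtwC
  rcases lt_trichotomy u v with a|a|a <;> rcases lt_trichotomy v w with b|b|b <;>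
    rcases lt_trichotomy w u with c|c|c <;>
    constructor <;> intro h <;> first
      | linarith
      | (exfalso; rcases h with ⟨h1,h2⟩|⟨h1,h2⟩|⟨h1,h2⟩ <;> linarith)
      | (obtain ⟨h1, h2⟩ := h
         first
           | (exfalso; apply h2; first
               | exact Or.inl ⟨by linarith, by linarith⟩
               | exact Or.inr (Or.inl ⟨by linarith, by linarith⟩)
               | exact Or.inr (Or.inr ⟨by linarith, by linarith⟩))
           | (rcases h1 with ⟨k1,k2⟩|⟨k1,k2⟩|⟨k1,k2⟩ <;> first
               | exact Or.inl ⟨by linarith, by linarith⟩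
               | exact Or.inr (Or.inl ⟨by linarith, by linarith⟩)
               | exact Or.inr (Or.inr ⟨by linarith, by linarith⟩)
               | linarith))
      | (constructor
         · rcases h with ⟨k1,k2⟩|⟨k1,k2⟩|⟨k1,k2⟩ <;> first
             | exact Or.inl ⟨by linarith, by linarith⟩
             | exact Or.inr (Or.inl ⟨by linarith, by linarith⟩)
             | exact Or.inr (Or.inr ⟨by linarith, by linarith⟩)
             | linarith
         · intro hc
           rcases hc with ⟨k1,k2⟩|⟨k1,k2⟩|⟨k1,k2⟩ <;>
             rcases h with ⟨m1,m2⟩|⟨m1,m2⟩|⟨m1,m2⟩ <;> linarith)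

lemma toIco_window {c u v : ℝ} (hp : (0:ℝ) < 2*Real.pi)
    (hu : c < u ∧ u ≤ c + 2*Real.pi) (hv : c < v ∧ v ≤ c + 2*Real.pi) :
    toIcoMod hp u v = if u ≤ v then v else v + 2*Real.pi := by
  split_ifs with h
  · exact (toIcoMod_eq_self hp).2 ⟨h, by linarith [hu.1, hu.2, hv.1, hv.2]⟩
  · have h2 := (toIcoMod_eq_self hp (a := u) (b := v + 2*Real.pi)).2
      ⟨by linarith [hu.1, hu.2, hv.1, hv.2], by linarith [hu.1, hu.2, hv.1, hv.2]⟩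
    rwa [toIcoMod_add_right] at h2

lemma toIoc_window {c u w : ℝ} (hp : (0:ℝ) < 2*Real.pi)
    (hu : c < u ∧ u ≤ c + 2*Real.pi) (hw : c < w ∧ w ≤ c + 2*Real.pi) :
    toIocMod hp u w = if u < w then w else w + 2*Real.pi := by
  split_ifs with h
  · exact (toIocMod_eq_self hp).2 ⟨h, by linarith [hu.1, hu.2, hw.1, hw.2]⟩
  · have h2 := (toIocMod_eq_self hp (a := u) (b := w + 2*Real.pi)).2
      ⟨by linarith [hu.1, hu.2, hw.1, hw.2], by linarith [hu.1, hu.2, hw.1, hw.2]⟩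
    rwa [toIocMod_add_right] at h2

instance : Fact ((0:ℝ) < 2*Real.pi) := ⟨two_pi_pos'⟩

lemma btw_bridge {c u v w : ℝ}
    (hu : c < u ∧ u ≤ c + 2*Real.pi) (hv : c < v ∧ v ≤ c + 2*Real.pi)
    (hw : c < w ∧ w ≤ c + 2*Real.pi) :
    btw (u : Real.Angle) (v : Real.Angle) (w : Real.Angle) ↔ btwC u v w := by
  have key : btw (u : Real.Angle) (v : Real.Angle) (w : Real.Angle) ↔
      toIcoMod two_pi_pos' u v ≤ toIocMod two_pi_pos' u w := QuotientAddGroup.btw_coe_iff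
  rw [key, toIco_window two_pi_pos' hu hv, toIoc_window two_pi_pos' hu hw]
  unfold btwC
  obtain ⟨hu1, hu2⟩ := hu; obtain ⟨hv1, hv2⟩ := hv; obtain ⟨hw1, hw2⟩ := hw
  split_ifs with h1 h2 h2 <;> constructor <;> intro hh <;> first
    | linarith
    | (rcases hh with ⟨a1,a2⟩|⟨a1,a2⟩|⟨a1,a2⟩ <;> linarith)
    | exact Or.inl ⟨by linarith, by linarith⟩
    | exact Or.inr (Or.inl ⟨by linarith, by linarith⟩)
    | exact Or.inr (Or.inr ⟨by linarith, by linarith⟩)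

lemma sbtw_bridge {c u v w : ℝ}
    (hu : c < u ∧ u ≤ c + 2*Real.pi) (hv : c < v ∧ v ≤ c + 2*Real.pi)
    (hw : c < w ∧ w ≤ c + 2*Real.pi) :
    sbtw (u : Real.Angle) (v : Real.Angle) (w : Real.Angle) ↔ sbtwC u v w := by
  rw [sbtw_iff_btw_not_btw, btw_bridge hu hv hw, btw_bridge hw hv hu, btwC_sbtwC]

lemma exists_rep (c : ℝ) (θ : Real.Angle) :
    ∃ r : ℝ, (c < r ∧ r ≤ c + 2*Real.pi) ∧ (r : Real.Angle) = θ := by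
  induction θ using Real.Angle.induction_on with
  | h s =>
    refine ⟨toIocMod two_pi_pos' c s, ⟨(toIocMod_mem_Ioc _ _ _).1, (toIocMod_mem_Ioc _ _ _).2⟩, ?_⟩
    rw [Real.Angle.angle_eq_iff_two_pi_dvd_sub]
    refine ⟨-(toIocDiv two_pi_pos' c s), ?_⟩
    have h2 : toIocMod two_pi_pos' c s = s - toIocDiv two_pi_pos' c s • (2*Real.pi) :=
      (self_sub_toIocDiv_zsmul two_pi_pos' c s).symm
    rw [h2, zsmul_eq_mul]
    push_cast
    ring

def LinkedC (a b s t : ℝ) : Prop := (sbtwC a s b ∧ sbtwC b t a) ∨ (sbtwC a t b ∧ sbtwC b s a)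

lemma sbtwC_rot {a b c : ℝ} : sbtwC a b c ↔ sbtwC b c a := by unfold sbtwC; tauto

lemma LinkedC_swap₂ {a b s t : ℝ} : LinkedC a b s t ↔ LinkedC a b t s := by unfold LinkedC; tauto

lemma LinkedC_swap₁ {a b s t : ℝ} : LinkedC a b s t ↔ LinkedC b a s t := by
  unfold LinkedC; tauto

/-- s below both, t above both: not linked -/
lemma nl_out {u v s t : ℝ} (h1 : s < u) (h2 : s < v) (h3 : u < t) (h4 : v < t) :
    ¬ LinkedC u v s t := by
  rintro (⟨hA,hB⟩|⟨hA,hB⟩) <;> rcases hA with ⟨a1,a2⟩|⟨a1,a2⟩|⟨a1,a2⟩ <;>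
    rcases hB with ⟨c1,c2⟩|⟨c1,c2⟩|⟨c1,c2⟩ <;> linarith

/-- s,t both below both u,v: not linked -/
lemma nl_low {u v s t : ℝ} (h1 : s < u) (h2 : s < v) (h3 : t < u) (h4 : t < v) :
    ¬ LinkedC u v s t := by
  rintro (⟨hA,hB⟩|⟨hA,hB⟩) <;> rcases hA with ⟨a1,a2⟩|⟨a1,a2⟩|⟨a1,a2⟩ <;>
    rcases hB with ⟨c1,c2⟩|⟨c1,c2⟩|⟨c1,c2⟩ <;> linarith

/-- s,t both strictly inside (u,v) with u < v: not linked -/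
lemma nl_in {u v s t : ℝ} (h1 : u < s) (h2 : s < v) (h3 : u < t) (h4 : t < v) :
    ¬ LinkedC u v s t := by
  rintro (⟨hA,hB⟩|⟨hA,hB⟩) <;> rcases hA with ⟨a1,a2⟩|⟨a1,a2⟩|⟨a1,a2⟩ <;>
    rcases hB with ⟨c1,c2⟩|⟨c1,c2⟩|⟨c1,c2⟩ <;> linarith

lemma core {cc b₁ b₂ a₂ p u v : ℝ} (o0 : cc < b₁) (o1 : b₁ < b₂) (o2 : b₂ < a₂) (o3 : a₂ < p)
    (hu1 : cc < u) (hu2 : u ≤ p) (hv1 : cc < v) (hv2 : v ≤ p) (huv : u ≠ v) :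
    (¬ LinkedC p b₁ u v ∧ ¬ LinkedC a₂ b₂ u v ∧
      ∀ s t : ℝ, cc < s → s ≤ p → cc < t → t ≤ p →
        LinkedC p b₁ s t → LinkedC a₂ b₂ s t → LinkedC u v s t) ↔
    ((btwC a₂ u p ∧ btwC b₁ v b₂) ∨ (btwC a₂ v p ∧ btwC b₁ u b₂)) := by
  have mkC1 : ∀ s t : ℝ, s < b₁ → b₁ < t → t < p → LinkedC p b₁ s t :=
    fun s t h2 h3 h4 => Or.inl ⟨Or.inr (Or.inl ⟨h2, by linarith⟩), Or.inl ⟨h3, h4⟩⟩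
  have mkC2 : ∀ s t : ℝ, s < b₂ → b₂ < t → t < a₂ → LinkedC a₂ b₂ s t :=
    fun s t h1 h2 h3 => Or.inl ⟨Or.inr (Or.inl ⟨h1, by linarith⟩), Or.inl ⟨h2, h3⟩⟩
  constructor
  · rintro ⟨n1, n2, hL⟩
    have claimA : ∀ z w : ℝ, cc < z → z ≤ p → cc < w → w ≤ p → z ≠ w →
        ¬ LinkedC p b₁ z w → ¬ LinkedC a₂ b₂ z w →
        (∀ s t : ℝ, cc < s → s ≤ p → cc < t → t ≤ p →
          LinkedC p b₁ s t → LinkedC a₂ b₂ s t → LinkedC z w s t) →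
        b₁ ≤ z ∧ (z ≤ b₂ ∨ a₂ ≤ z) := by
      intro z w hz1 hz2 hw1 hw2 hzw nz1 nz2 hLz
      constructor
      · by_contra hc
        push_neg at hc
        have hw' : w ≤ b₁ ∨ w = p := by
          by_contra hcc
          push_neg at hcc
          obtain ⟨hA, hB⟩ := hcc
          exact nz1 (mkC1 z w hc hA (lt_of_le_of_ne hw2 hB))
        rcases hw' with hw' | hw'
        · have hm1 : cc < min z w := lt_min hz1 hw1
          have hm2 := min_le_left z w
          have hm3 := min_le_right z w
          have l := hLz ((cc + min z w)/2) ((b₂+a₂)/2)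
            (by linarith) (by linarith) (by linarith) (by linarith)
            (mkC1 _ _ (by linarith) (by linarith) (by linarith))
            (mkC2 _ _ (by linarith) (by linarith) (by linarith))
          exact nl_out (by linarith) (by linarith) (by linarith) (by linarith) l
        · subst hw'
          have l := hLz ((z+b₁)/2) ((b₂+a₂)/2)
            (by linarith) (by linarith) (by linarith) (by linarith)
            (mkC1 _ _ (by linarith) (by linarith) (by linarith))
            (mkC2 _ _ (by linarith) (by linarith) (by linarith))
          exact nl_in (by linarith) (by linarith) (by linarith) (by linarith) l
      · by_contra hc
        push_neg at hc
        obtain ⟨hc1, hc2⟩ := hc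
        have hw' : b₂ ≤ w ∧ w ≤ a₂ := by
          by_contra hcc
          have hw'' : w < b₂ ∨ a₂ < w := by
            rcases not_and_or.1 hcc with h | h
            · exact Or.inl (lt_of_not_ge h)
            · exact Or.inr (lt_of_not_ge h)
          apply nz2
          refine Or.inr ⟨?_, Or.inl ⟨hc1, hc2⟩⟩
          rcases hw'' with h | h
          · exact Or.inr (Or.inl ⟨h, by linarith⟩)
          · exact Or.inr (Or.inr ⟨by linarith, h⟩)
        obtain ⟨hwb, hwa⟩ := hw'
        rcases lt_or_ge b₂ (min z w) with hm | hm
        · have hm2 := min_le_left z w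
          have hm3 := min_le_right z w
          have l := hLz ((cc+b₁)/2) ((b₂ + min z w)/2)
            (by linarith) (by linarith) (by linarith) (by linarith)
            (mkC1 _ _ (by linarith) (by linarith) (by linarith))
            (mkC2 _ _ (by linarith) (by linarith) (by linarith))
          exact nl_low (by linarith) (by linarith) (by linarith) (by linarith) l
        · have hwm : w = b₂ := by
            rcases le_total z w with h | h
            · rw [min_eq_left h] at hm; linarith
            · rw [min_eq_right h] at hm; linarith
          subst hwm
          have l := hLz ((cc+b₁)/2) ((z+a₂)/2)
            (by linarith) (by linarith) (by linarith) (by linarith)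
            (mkC1 _ _ (by linarith) (by linarith) (by linarith))
            (mkC2 _ _ (by linarith) (by linarith) (by linarith))
          exact nl_out (by linarith) (by linarith) (by linarith) (by linarith) l
    have A1 := claimA u v hu1 hu2 hv1 hv2 huv n1 n2 hL
    have A2 := claimA v u hv1 hv2 hu1 hu2 (Ne.symm huv)
      (fun h => n1 (LinkedC_swap₂.1 h))
      (fun h => n2 (LinkedC_swap₂.1 h))
      (fun s t h1 h2 h3 h4 c1 c2 => LinkedC_swap₁.1 (hL s t h1 h2 h3 h4 c1 c2))
    obtain ⟨hub, hu'⟩ := A1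
    obtain ⟨hvb, hv'⟩ := A2
    rcases hu' with hu' | hu' <;> rcases hv' with hv' | hv'
    · exfalso
      have l := hL ((cc+b₁)/2) ((b₂+a₂)/2)
        (by linarith) (by linarith) (by linarith) (by linarith)
        (mkC1 _ _ (by linarith) (by linarith) (by linarith))
        (mkC2 _ _ (by linarith) (by linarith) (by linarith))
      exact nl_out (by linarith) (by linarith) (by linarith) (by linarith) l
    · exact Or.inr ⟨Or.inl ⟨hv', hv2⟩, Or.inl ⟨hub, hu'⟩⟩
    · exact Or.inl ⟨Or.inl ⟨hu', hu2⟩, Or.inl ⟨hvb, hv'⟩⟩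
    · exfalso
      have l := hL ((cc+b₁)/2) ((b₂+a₂)/2)
        (by linarith) (by linarith) (by linarith) (by linarith)
        (mkC1 _ _ (by linarith) (by linarith) (by linarith))
        (mkC2 _ _ (by linarith) (by linarith) (by linarith))
      exact nl_low (by linarith) (by linarith) (by linarith) (by linarith) l
  · have half : ∀ z w : ℝ, cc < z → z ≤ p → cc < w → a₂ ≤ z → b₁ ≤ w → w ≤ b₂ →
        (¬ LinkedC p b₁ z w ∧ ¬ LinkedC a₂ b₂ z w ∧
          ∀ s t : ℝ, cc < s → s ≤ p → cc < t → t ≤ p →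
            LinkedC p b₁ s t → LinkedC a₂ b₂ s t → LinkedC z w s t) := by
      intro z w hz1 hz2 hw1 haz hbw hwb
      refine ⟨?_, ?_, ?_⟩
      · rintro (⟨hA,hB⟩|⟨hA,hB⟩) <;> rcases hA with ⟨k1,k2⟩|⟨k1,k2⟩|⟨k1,k2⟩ <;> linarith
      · rintro (⟨hA,hB⟩|⟨hA,hB⟩) <;> rcases hB with ⟨k1,k2⟩|⟨k1,k2⟩|⟨k1,k2⟩ <;> linarith
      · intro s t hs1 hs2 ht1 ht2 c1 c2
        rcases c1 with ⟨c1A, c1B⟩ | ⟨c1A, c1B⟩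
        · have hsb : s < b₁ := by rcases c1A with ⟨k1,k2⟩|⟨k1,k2⟩|⟨k1,k2⟩ <;> linarith
          have ht3 : b₂ < t ∧ t < a₂ := by
            rcases c2 with ⟨c2A, c2B⟩ | ⟨c2A, c2B⟩
            · rcases c2B with ⟨k1,k2⟩|⟨k1,k2⟩|⟨k1,k2⟩ <;> constructor <;> linarith
            · rcases c2B with ⟨k1,k2⟩|⟨k1,k2⟩|⟨k1,k2⟩ <;> constructor <;> linarith
          exact Or.inl ⟨Or.inr (Or.inl ⟨by linarith, by linarith⟩),
            Or.inl ⟨by linarith [ht3.1], by linarith [ht3.2]⟩⟩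
        · have htb : t < b₁ := by rcases c1A with ⟨k1,k2⟩|⟨k1,k2⟩|⟨k1,k2⟩ <;> linarith
          have hs3 : b₂ < s ∧ s < a₂ := by
            rcases c2 with ⟨c2A, c2B⟩ | ⟨c2A, c2B⟩
            · rcases c2B with ⟨k1,k2⟩|⟨k1,k2⟩|⟨k1,k2⟩ <;> constructor <;> linarith
            · rcases c2B with ⟨k1,k2⟩|⟨k1,k2⟩|⟨k1,k2⟩ <;> constructor <;> linarith
          exact Or.inr ⟨Or.inr (Or.inl ⟨by linarith, by linarith⟩),
            Or.inl ⟨by linarith [hs3.1], by linarith [hs3.2]⟩⟩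
    rintro (⟨h1, h2⟩ | ⟨h1, h2⟩)
    · have hau : a₂ ≤ u := by rcases h1 with ⟨k1,k2⟩|⟨k1,k2⟩|⟨k1,k2⟩ <;> linarith
      have hbv : b₁ ≤ v ∧ v ≤ b₂ := by
        rcases h2 with ⟨k1,k2⟩|⟨k1,k2⟩|⟨k1,k2⟩ <;> constructor <;> linarith
      exact half u v hu1 hu2 hv1 hau hbv.1 hbv.2
    · have hav : a₂ ≤ v := by rcases h1 with ⟨k1,k2⟩|⟨k1,k2⟩|⟨k1,k2⟩ <;> linarith
      have hbu : b₁ ≤ u ∧ u ≤ b₂ := by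
        rcases h2 with ⟨k1,k2⟩|⟨k1,k2⟩|⟨k1,k2⟩ <;> constructor <;> linarith
      obtain ⟨m1, m2, m3⟩ := half v u hv1 hv2 hu1 hav hbu.1 hbu.2
      exact ⟨fun h => m1 (LinkedC_swap₂.1 h), fun h => m2 (LinkedC_swap₂.1 h),
        fun s t a b c d e f => LinkedC_swap₁.1 (m3 s t a b c d e f)⟩

/-- Two unordered pairs `{a,b}` and `{c,d}` of points of the circle link: all four
points are distinct and `c, d` lie in different components of `S¹ \ {a,b}`. -/
def Linked (a b c d : Real.Angle) : Prop :=
  (sbtw a c b ∧ sbtw b d a) ∨ (sbtw a d b ∧ sbtw b c a)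

lemma linked_bridge {c a b s t : ℝ}
    (ha : c < a ∧ a ≤ c + 2*Real.pi) (hb : c < b ∧ b ≤ c + 2*Real.pi)
    (hs : c < s ∧ s ≤ c + 2*Real.pi) (ht : c < t ∧ t ≤ c + 2*Real.pi) :
    Linked (a : Real.Angle) (b : Real.Angle) (s : Real.Angle) (t : Real.Angle) ↔
      LinkedC a b s t := by
  unfold Linked LinkedC
  rw [sbtw_bridge ha hs hb, sbtw_bridge hb ht ha, sbtw_bridge ha ht hb, sbtw_bridge hb hs ha]

/-- Let `x₁, y₁, y₂, x₂` be four points in counterclockwise cyclic order on the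
circle, so that the pairs `{x₁,y₁}` and `{x₂,y₂}` do not link.  An unordered pair
`{x,y}` of distinct points links neither `{x₁,y₁}` nor `{x₂,y₂}` but links every pair
linking both, if and only if (up to swapping `x` and `y`) `x` lies in the closed
counterclockwise arc `[x₂,x₁]` and `y` in the closed counterclockwise arc `[y₁,y₂]`. -/
theorem stmt_14 (x₁ y₁ y₂ x₂ : Real.Angle)
    (hccw : sbtw x₁ y₁ y₂ ∧ sbtw y₁ y₂ x₂ ∧ sbtw y₂ x₂ x₁ ∧ sbtw x₂ x₁ y₁)
    (x y : Real.Angle) (hxy : x ≠ y) :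
    (¬ Linked x₁ y₁ x y ∧ ¬ Linked x₂ y₂ x y ∧
      ∀ c d : Real.Angle, Linked x₁ y₁ c d → Linked x₂ y₂ c d → Linked x y c d) ↔
    ((btw x₂ x x₁ ∧ btw y₁ y y₂) ∨ (btw x₂ y x₁ ∧ btw y₁ x y₂)) := by
  obtain ⟨h1, h2, h3, h4⟩ := hccw
  obtain ⟨p, rfl⟩ : ∃ p : ℝ, (p : Real.Angle) = x₁ := ⟨x₁.toReal, x₁.coe_toReal⟩
  set c : ℝ := p - 2*Real.pi with hc
  have hpm : c < p ∧ p ≤ c + 2*Real.pi := ⟨by simp [hc]; linarith [Real.pi_pos], by simp [hc]⟩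
  obtain ⟨b₁, hb₁, rfl⟩ := exists_rep c y₁
  obtain ⟨b₂, hb₂, rfl⟩ := exists_rep c y₂
  obtain ⟨a₂, ha₂, rfl⟩ := exists_rep c x₂
  obtain ⟨u, hu, rfl⟩ := exists_rep c x
  obtain ⟨v, hv, rfl⟩ := exists_rep c y
  have hcp : c + 2*Real.pi = p := by rw [hc]; ring
  rw [sbtw_bridge hpm hb₁ hb₂] at h1
  rw [sbtw_bridge hb₁ hb₂ ha₂] at h2
  rw [sbtw_bridge hb₂ ha₂ hpm] at h3
  rw [sbtw_bridge ha₂ hpm hb₁] at h4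
  have hb₁p : b₁ ≤ p := by linarith [hb₁.2]
  have hb₂p : b₂ ≤ p := by linarith [hb₂.2]
  have ha₂p : a₂ ≤ p := by linarith [ha₂.2]
  have hup : u ≤ p := by linarith [hu.2]
  have hvp : v ≤ p := by linarith [hv.2]
  have ob : b₁ < b₂ := by
    rcases h1 with ⟨k1,k2⟩|⟨k1,k2⟩|⟨k1,k2⟩ <;> linarith
  have oba : b₂ < a₂ ∧ a₂ < p := by
    rcases h3 with ⟨k1,k2⟩|⟨k1,k2⟩|⟨k1,k2⟩ <;> constructor <;> linarith
  have huv : u ≠ v := fun h => hxy (by rw [h])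
  have hforall : (∀ cc dd : Real.Angle,
        Linked ((p:ℝ) : Real.Angle) ((b₁:ℝ) : Real.Angle) cc dd →
        Linked ((a₂:ℝ) : Real.Angle) ((b₂:ℝ) : Real.Angle) cc dd →
        Linked ((u:ℝ) : Real.Angle) ((v:ℝ) : Real.Angle) cc dd) ↔
      (∀ s t : ℝ, c < s → s ≤ p → c < t → t ≤ p →
        LinkedC p b₁ s t → LinkedC a₂ b₂ s t → LinkedC u v s t) := by
    constructor
    · intro H s t hs1 hs2 ht1 ht2 l1 l2
      have hs : c < s ∧ s ≤ c + 2*Real.pi := ⟨hs1, by linarith⟩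
      have ht : c < t ∧ t ≤ c + 2*Real.pi := ⟨ht1, by linarith⟩
      exact (linked_bridge hu hv hs ht).1
        (H ↑s ↑t ((linked_bridge hpm hb₁ hs ht).2 l1) ((linked_bridge ha₂ hb₂ hs ht).2 l2))
    · intro H cc dd l1 l2
      obtain ⟨s, hs, rfl⟩ := exists_rep c cc
      obtain ⟨t, ht, rfl⟩ := exists_rep c dd
      exact (linked_bridge hu hv hs ht).2
        (H s t hs.1 (by linarith [hs.2]) ht.1 (by linarith [ht.2])
          ((linked_bridge hpm hb₁ hs ht).1 l1) ((linked_bridge ha₂ hb₂ hs ht).1 l2))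
  rw [linked_bridge hpm hb₁ hu hv, linked_bridge ha₂ hb₂ hu hv, hforall,
    btw_bridge ha₂ hu hpm, btw_bridge hb₁ hv hb₂, btw_bridge ha₂ hv hpm, btw_bridge hb₁ hu hb₂]
  exact core hb₁.1 ob oba.1 oba.2 hu.1 hup hv.1 hvp huv
end
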